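/- Let γ = (γ_j)_{j∈ℤ} be a sequence of Hénon-form maps, and suppose there exists R₀ > 0 such that for every R > R₀ there exists ρ > 1 such that every γ_j (j ∈ ℤ) satisfies condition (A) for (R, ρ). If limsup_{n→∞} (1/n) Σ_{j=0}^{n−1} log|δ(γ_j)| < 0 and limsup_{n→∞} Leb₄(K_{σⁿ(γ)}⁺) > 0, then Leb₄(K_γ⁺) = ∞. -/

import Mathlib

open Complex Filter Set Topology MeasureTheory Bornology

noncomputable section

/-- A Hénon-form map `f(x,y) = (y + a, p(y) - δ x)` with `δ ≠ 0` and `deg p ≥ 2`. -/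
structure HenonMap : Type where
  a : ℂ
  δ : ℂ
  p : Polynomial ℂ
  hδ : δ ≠ 0
  hdeg : 2 ≤ p.natDegree

namespace HenonMap

/-- The map itself. -/
def toFun (f : HenonMap) (z : ℂ × ℂ) : ℂ × ℂ :=
  (z.2 + f.a, f.p.eval z.2 - f.δ * z.1)

/-- The inverse map `f⁻¹(x,y) = (δ⁻¹ (p(x - a) - y), x - a)`. -/
def invFun (f : HenonMap) (z : ℂ × ℂ) : ℂ × ℂ :=
  (f.δ⁻¹ * (f.p.eval (z.1 - f.a) - z.2), z.1 - f.a)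

end HenonMap

/-- `V_R⁺ = {(x,y) : max(R,|x|) < |y|}`. -/
def VPlus (R : ℝ) : Set (ℂ × ℂ) := {z | max R (‖z.1‖) < ‖z.2‖}

/-- `V_R⁻ = {(x,y) : max(R,|y|) < |x|}`. -/
def VMinus (R : ℝ) : Set (ℂ × ℂ) := {z | max R (‖z.2‖) < ‖z.1‖}

/-- `D_R = {(x,y) : max(|x|,|y|) < R}`. -/
def DDisk (R : ℝ) : Set (ℂ × ℂ) := {z | max (‖z.1‖) (‖z.2‖) < R}

/-- Condition (A) for `(R, ρ)`. -/
def CondA (f : HenonMap) (R ρ : ℝ) : Prop :=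
  (∀ z ∈ closure (VPlus R),
    f.toFun z ∈ VPlus R ∧ ρ * ‖z.2‖ < ‖(f.toFun z).2‖) ∧
  (∀ z ∈ closure (VMinus R),
    f.invFun z ∈ VMinus R ∧ ρ * ‖z.1‖ < ‖(f.invFun z).1‖)

/-- A parameter-bounded family of Hénon-form maps. -/
def ParamBounded (Γ : Set HenonMap) : Prop :=
  ∃ (D : ℕ) (A d₀ Δ m M : ℝ),
    2 ≤ D ∧ 0 ≤ A ∧ 0 < d₀ ∧ d₀ ≤ Δ ∧ 0 < m ∧ m ≤ M ∧
    ∀ f ∈ Γ,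
      f.p.natDegree ≤ D ∧ ‖f.a‖ ≤ A ∧
      d₀ ≤ ‖f.δ‖ ∧ ‖f.δ‖ ≤ Δ ∧
      (∀ i : ℕ, ‖(f.p.coeff i)‖ ≤ M) ∧
      m ≤ ‖f.p.leadingCoeff‖

/-- Forward composition: `fwd γ n = γ_{n-1} ∘ ⋯ ∘ γ₀`. -/
def fwd (γ : ℤ → HenonMap) : ℕ → (ℂ × ℂ) → ℂ × ℂ
  | 0 => id
  | n + 1 => fun z => (γ (n : ℤ)).toFun (fwd γ n z)

/-- Backward composition: `bwd γ n = γ_{-n}⁻¹ ∘ ⋯ ∘ γ_{-1}⁻¹`. -/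
def bwd (γ : ℤ → HenonMap) : ℕ → (ℂ × ℂ) → ℂ × ℂ
  | 0 => id
  | n + 1 => fun z => (γ (-((n : ℤ) + 1))).invFun (bwd γ n z)

/-- `K_γ⁺` : points with bounded forward orbit. -/
def KPlus (γ : ℤ → HenonMap) : Set (ℂ × ℂ) :=
  {z | IsBounded (Set.range fun n : ℕ => fwd γ n z)}

/-- `K_γ⁻` : points with bounded backward orbit. -/
def KMinus (γ : ℤ → HenonMap) : Set (ℂ × ℂ) :=
  {z | IsBounded (Set.range fun n : ℕ => bwd γ n z)}

/-- `I_γ⁺` : points whose forward orbit tends to infinity in norm. -/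
def IPlus (γ : ℤ → HenonMap) : Set (ℂ × ℂ) :=
  {z | Tendsto (fun n : ℕ => ‖fwd γ n z‖) atTop atTop}

/-- `I_γ⁻` : points whose backward orbit tends to infinity in norm. -/
def IMinus (γ : ℤ → HenonMap) : Set (ℂ × ℂ) :=
  {z | Tendsto (fun n : ℕ => ‖bwd γ n z‖) atTop atTop}

/-- The iterated shift: `(σⁿ γ)_j = γ_{j+n}`. -/
def shiftIter (γ : ℤ → HenonMap) (n : ℕ) : ℤ → HenonMap := fun j => γ (j + n)

/-- `log⁺ t = max (log t) 0`. -/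
def logPlus (t : ℝ) : ℝ := max (Real.log t) 0

/-- `G_{γ,n}⁺(z) = (deg γ_{n-1} ⋯ deg γ₀)⁻¹ log⁺ ‖γ_{n-1} ∘ ⋯ ∘ γ₀ (z)‖`. -/
def GPlusN (γ : ℤ → HenonMap) (n : ℕ) (z : ℂ × ℂ) : ℝ :=
  (∏ j ∈ Finset.range n, ((γ (j : ℤ)).p.natDegree : ℝ))⁻¹ * logPlus ‖fwd γ n z‖

/-- `G_{γ,n}⁻(z) = (deg γ_{-1} ⋯ deg γ_{-n})⁻¹ log⁺ ‖γ_{-n}⁻¹ ∘ ⋯ ∘ γ_{-1}⁻¹ (z)‖`. -/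
def GMinusN (γ : ℤ → HenonMap) (n : ℕ) (z : ℂ × ℂ) : ℝ :=
  (∏ j ∈ Finset.range n, ((γ (-((j : ℤ) + 1))).p.natDegree : ℝ))⁻¹ * logPlus ‖bwd γ n z‖

/-!
Each `γ_j` scales Lebesgue measure by `|δ_j|²`, and `K_γ⁺ = γ_{n-1,0}⁻¹ (K_{σⁿγ}⁺)`, so
`Leb(K_γ⁺) = |δ_0 ⋯ δ_{n-1}|⁻² Leb(K_{σⁿγ}⁺)` for every `n`. The log-average hypothesis makes
`|δ_0 ⋯ δ_{n-1}|` decay exponentially, while `Leb(K_{σⁿγ}⁺)` exceeds a fixed `ε > 0` for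
infinitely many `n`.
-/

open MeasureTheory Measure
open scoped ENNReal

lemma Complex.map_volume_mul_left {c : ℂ} (hc : c ≠ 0) :
    map (c * ·) volume = (ENNReal.ofReal (‖c‖ ^ 2))⁻¹ • (volume : Measure ℂ) := by
  have hdet : LinearMap.det (LinearMap.mul ℝ ℂ c) = ‖c‖ ^ 2 := by
    rw [← Complex.normSq_eq_norm_sq, ← Algebra.norm_complex_apply]
    rfl
  have hc2 : 0 < ‖c‖ ^ 2 := by positivity
  have := map_linearMap_addHaar_eq_smul_addHaar volume (f := LinearMap.mul ℝ ℂ c)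
    (by rw [hdet]; exact hc2.ne')
  rwa [hdet, abs_inv, abs_of_pos hc2, ENNReal.ofReal_inv_of_pos hc2] at this

lemma Complex.map_volume_sub_mul_left (b : ℂ) {c : ℂ} (hc : c ≠ 0) :
    map (fun x => b - c * x) volume = (ENNReal.ofReal (‖c‖ ^ 2))⁻¹ • (volume : Measure ℂ) := by
  have : (fun x => b - c * x) = (b + ·) ∘ (-c * ·) := by ext x; simp [sub_eq_add_neg]
  rw [this, ← map_map (measurable_const_add b) (measurable_const_mul _),
    Complex.map_volume_mul_left (neg_ne_zero.2 hc), Measure.map_smul, map_add_left_eq_self,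
    norm_neg]

namespace HenonMap

lemma continuous_toFun (f : HenonMap) : Continuous f.toFun := by
  unfold toFun; fun_prop

/-- `f` is a skew product over `y ↦ y + a` whose fibre maps `x ↦ p(y) - δ x` are affine. -/
lemma measurePreserving_toFun (f : HenonMap) :
    MeasurePreserving f.toFun volume ((ENNReal.ofReal (‖f.δ‖ ^ 2))⁻¹ • volume) := by
  have hskew : MeasurePreserving (fun q : ℂ × ℂ => (q.1 + f.a, f.p.eval q.1 - f.δ * q.2))
      (volume.prod volume) (volume.prod ((ENNReal.ofReal (‖f.δ‖ ^ 2))⁻¹ • volume)) :=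
    (measurePreserving_add_right volume f.a).skew_product
      ((f.p.continuous.comp continuous_fst).sub (continuous_const.mul continuous_snd)).measurable
      (.of_forall fun y => Complex.map_volume_sub_mul_left (f.p.eval y) f.hδ)
  rw [Measure.prod_smul_right] at hskew
  exact hskew.comp measurePreserving_swap

lemma volume_preimage_toFun (f : HenonMap) {S : Set (ℂ × ℂ)} (hS : MeasurableSet S) :
    volume (f.toFun ⁻¹' S) = (ENNReal.ofReal (‖f.δ‖ ^ 2))⁻¹ * volume S := by
  rw [f.measurePreserving_toFun.measure_preimage hS.nullMeasurableSet, Measure.smul_apply,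
    smul_eq_mul]

end HenonMap

lemma continuous_fwd (γ : ℤ → HenonMap) (n : ℕ) : Continuous (fwd γ n) := by
  induction n with
  | zero => exact continuous_id
  | succ n ih => exact (γ n).continuous_toFun.comp ih

lemma volume_preimage_fwd (γ : ℤ → HenonMap) (n : ℕ) {S : Set (ℂ × ℂ)} (hS : MeasurableSet S) :
    volume (fwd γ n ⁻¹' S)
      = (∏ j ∈ Finset.range n, ENNReal.ofReal (‖(γ j).δ‖ ^ 2))⁻¹ * volume S := by
  induction n generalizing S with
  | zero => simp [fwd]
  | succ n ih =>
    have hpos : ENNReal.ofReal (‖(γ n).δ‖ ^ 2) ≠ 0 := by simpa using (γ n).hδ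
    rw [show fwd γ (n + 1) ⁻¹' S = fwd γ n ⁻¹' ((γ n).toFun ⁻¹' S) from rfl,
      ih (hS.preimage (γ n).continuous_toFun.measurable), (γ n).volume_preimage_toFun hS,
      Finset.prod_range_succ, ENNReal.mul_inv (.inr ENNReal.ofReal_ne_top) (.inr hpos), mul_assoc]

lemma fwd_shiftIter (γ : ℤ → HenonMap) (n m : ℕ) (z : ℂ × ℂ) :
    fwd (shiftIter γ n) m (fwd γ n z) = fwd γ (m + n) z := by
  induction m with
  | zero => simp [fwd]
  | succ m ih => simp [fwd, shiftIter, ih, Nat.add_right_comm]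

lemma Bornology.isBounded_range_add_nat_iff {α : Type*} [Bornology α] (u : ℕ → α) (n : ℕ) :
    IsBounded (range fun m => u (m + n)) ↔ IsBounded (range u) := by
  rw [range_add_eq_image_Ici]
  refine ⟨fun h => ?_, fun h => h.subset (image_subset_range _ _)⟩
  rw [← image_univ, ← Iio_union_Ici (a := n), image_union]
  exact ((finite_Iio n).image u).isBounded.union h

lemma KPlus_eq_preimage_fwd (γ : ℤ → HenonMap) (n : ℕ) :
    KPlus γ = fwd γ n ⁻¹' KPlus (shiftIter γ n) := by
  ext z
  simp only [KPlus, mem_preimage, mem_ofPred_eq, fwd_shiftIter,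
    Bornology.isBounded_range_add_nat_iff (fun m => fwd γ m z)]

lemma measurableSet_KPlus (γ : ℤ → HenonMap) : MeasurableSet (KPlus γ) := by
  have : KPlus γ = {z | BddAbove (range fun n => ‖fwd γ n z‖)} := by
    ext z
    simp [KPlus, isBounded_iff_forall_norm_le, bddAbove_def]
  rw [this]
  exact measurableSet_bddAbove_range fun n => (continuous_fwd γ n).norm.measurable

lemma tendsto_prod_zero_of_limsup_avg_log_neg {a : ℕ → ℝ} (ha : ∀ j, 0 < a j)
    (h : limsup (fun n : ℕ => ((((1 : ℝ) / n) * ∑ j ∈ Finset.range n, Real.log (a j) : ℝ) : EReal))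
      atTop < 0) :
    Tendsto (fun n => ∏ j ∈ Finset.range n, a j) atTop (𝓝 0) := by
  obtain ⟨c, hlt, hc⟩ := EReal.exists_between_coe_real h
  have hc : c < 0 := by exact_mod_cast hc
  have hbound : ∀ᶠ n : ℕ in atTop, ∏ j ∈ Finset.range n, a j ≤ Real.exp (c * n) := by
    filter_upwards [eventually_lt_of_limsup_lt hlt, eventually_ge_atTop 1] with n hn hn1
    have hn : ∑ j ∈ Finset.range n, Real.log (a j) < c * n := by
      rw [← div_lt_iff₀ (by exact_mod_cast hn1), div_eq_inv_mul, ← one_div]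
      exact_mod_cast hn
    calc ∏ j ∈ Finset.range n, a j = Real.exp (∑ j ∈ Finset.range n, Real.log (a j)) := by
          rw [Real.exp_sum]; exact Finset.prod_congr rfl fun j _ => (Real.exp_log (ha j)).symm
      _ ≤ Real.exp (c * n) := Real.exp_le_exp.2 hn.le
  refine squeeze_zero' (.of_forall fun n => Finset.prod_nonneg fun j _ => (ha j).le) hbound ?_
  exact Real.tendsto_exp_atBot.comp (tendsto_natCast_atTop_atTop.const_mul_atTop_of_neg hc)

lemma ENNReal.eq_top_of_forall_eq_inv_mul {ι : Type*} {l : Filter ι} {a : ℝ≥0∞}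
    {u v : ι → ℝ≥0∞} (h : ∀ i, a = (u i)⁻¹ * v i) (hu : Tendsto u l (𝓝 0))
    (hv : 0 < limsup v l) : a = ⊤ := by
  obtain ⟨ε, hε0, hεv⟩ := exists_between hv
  have hlim : Tendsto (fun i => (u i)⁻¹ * ε) l (𝓝 ⊤) := by
    simpa [ENNReal.top_mul hε0.ne'] using
      ENNReal.Tendsto.mul_const (tendsto_inv_iff.2 hu) (.inl (by simp)) (b := ε)
  refine top_le_iff.1 (le_of_tendsto_of_frequently hlim ?_)
  refine (frequently_lt_of_lt_limsup (by isBoundedDefault) hεv).mono fun i hi => ?_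
  rw [h i]
  gcongr

theorem stmt_9_general (γ : ℤ → HenonMap)
    (hlim : Filter.limsup
      (fun n : ℕ => ((((1 : ℝ) / n) * ∑ j ∈ Finset.range n,
        Real.log (‖(γ (j : ℤ)).δ‖) : ℝ) : EReal)) Filter.atTop < 0)
    (hK : 0 < Filter.limsup (fun n : ℕ => volume (KPlus (shiftIter γ n))) Filter.atTop) :
    volume (KPlus γ) = ⊤ := by
  have hvol : ∀ n : ℕ, volume (KPlus γ) = (∏ j ∈ Finset.range n,
      ENNReal.ofReal (‖(γ j).δ‖ ^ 2))⁻¹ * volume (KPlus (shiftIter γ n)) := fun n => by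
    rw [KPlus_eq_preimage_fwd γ n, volume_preimage_fwd γ n (measurableSet_KPlus _)]
  have hjac : Tendsto (fun n : ℕ => ∏ j ∈ Finset.range n, ENNReal.ofReal (‖(γ j).δ‖ ^ 2))
      atTop (𝓝 0) := by
    have hprod := tendsto_prod_zero_of_limsup_avg_log_neg (fun j => norm_pos_iff.2 (γ j).hδ) hlim
    have := ENNReal.tendsto_ofReal (hprod.pow 2)
    rw [zero_pow two_ne_zero, ENNReal.ofReal_zero] at this
    refine this.congr fun n => ?_
    rw [← Finset.prod_pow, ENNReal.ofReal_prod_of_nonneg fun j _ => by positivity]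
  exact ENNReal.eq_top_of_forall_eq_inv_mul hvol hjac hK

/-- negative limsup of average log-Jacobians plus positive limsup of the
measures of the shifted `K⁺`-sets forces `Leb₄(K_γ⁺) = ∞`. -/
theorem stmt_9 (γ : ℤ → HenonMap) (R₀ : ℝ) (hR₀ : 0 < R₀)
    (hA : ∀ R : ℝ, R₀ < R → ∃ ρ : ℝ, 1 < ρ ∧ ∀ j : ℤ, CondA (γ j) R ρ)
    (hlim : Filter.limsup
      (fun n : ℕ => ((((1 : ℝ) / n) * ∑ j ∈ Finset.range n,
        Real.log (‖(γ (j : ℤ)).δ‖) : ℝ) : EReal)) Filter.atTop < 0)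
    (hK : 0 < Filter.limsup (fun n : ℕ => volume (KPlus (shiftIter γ n))) Filter.atTop) :
    volume (KPlus γ) = ⊤ :=
  stmt_9_general γ hlim hK
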